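/- Let 0 < α < 1, h > 0, and j₀ < j₁ integers. If u : ℤ → ℝ is bounded, (δ_right)^α u(j) ≥ 0 for all j₀ ≤ j < j₁, and u(j) ≥ 0 for all j ≥ j₁, then u(j) ≥ 0 for all j ≥ j₀. -/

import Mathlib

open Real

/-- The generalized binomial coefficient `(α choose m) = α(α−1)⋯(α−m+1)/m!`. -/
noncomputable def rchoose (α : ℝ) (m : ℕ) : ℝ :=
  (∏ i ∈ Finset.range m, (α - i)) / (m.factorial : ℝ)

/-- The kernel `Λ^α(m) = (−1)^m (α choose m)`. -/
noncomputable def Lam (α : ℝ) (m : ℕ) : ℝ := (-1) ^ m * rchoose α m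

/-- The fractional discrete derivative on the mesh `ℤ_h`:
`(δ_right)^α u(n) = h^{-α} ∑_{m=0}^∞ Λ^α(m) u(n+m)`. -/
noncomputable def deltaRightPow (α h : ℝ) (u : ℤ → ℝ) (n : ℤ) : ℝ :=
  h ^ (-α) * ∑' m : ℕ, Lam α m * u (n + (m : ℤ))

/-!
At a point `j` where `u` is nonnegative to the right, `(δ_right)^α u(j) ≥ 0` forces `u j ≥ 0`,
because `u j` enters with weight `Λ^α(0) = 1` while every other weight `Λ^α(m)` is negative.
Hence the rightmost negative value of `u` in `[j₀, ∞)`, if there were one, would lie in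
`[j₀, j₁)` and contradict this. Negativity of the weights and their summability both come from
`∑_{m ≤ N} Λ^α(m) = Λ^{α-1}(N)`, whose right side lies in `(0, 1]` for `0 < α < 1`.
-/

lemma Lam_zero (α : ℝ) : Lam α 0 = 1 := by
  simp [Lam, rchoose]

lemma Lam_succ (α : ℝ) (m : ℕ) :
    Lam α (m + 1) = Lam α m * ((m - α) / (m + 1)) := by
  have hm : (m.factorial : ℝ) ≠ 0 := Nat.cast_ne_zero.2 m.factorial_ne_zero
  simp only [Lam, rchoose, Finset.prod_range_succ, Nat.factorial_succ,
    Nat.cast_mul, Nat.cast_add, Nat.cast_one, pow_succ]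
  field_simp
  ring

lemma Lam_succ_eq_neg_mul_Lam_sub_one (α : ℝ) (N : ℕ) :
    Lam α (N + 1) = -(α / (N + 1)) * Lam (α - 1) N := by
  induction N with
  | zero => simp [Lam_succ, Lam_zero]
  | succ N ih =>
    rw [Lam_succ, ih, Lam_succ (α - 1)]
    push_cast
    field_simp
    ring

lemma Lam_pos_of_neg {β : ℝ} (hβ : β < 0) (N : ℕ) : 0 < Lam β N := by
  induction N with
  | zero => simp [Lam_zero]
  | succ N ih =>
    rw [Lam_succ]
    exact mul_pos ih (div_pos (by linarith [N.cast_nonneg (α := ℝ)]) (by positivity))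

lemma Lam_succ_neg {α : ℝ} (hα : 0 < α) (hα1 : α < 1) (m : ℕ) : Lam α (m + 1) < 0 := by
  rw [Lam_succ_eq_neg_mul_Lam_sub_one, neg_mul]
  exact neg_neg_of_pos (mul_pos (by positivity) (Lam_pos_of_neg (by linarith) m))

lemma sum_range_succ_Lam (α : ℝ) (N : ℕ) :
    ∑ m ∈ Finset.range (N + 1), Lam α m = Lam (α - 1) N := by
  induction N with
  | zero => simp [Lam_zero]
  | succ N ih =>
    rw [Finset.sum_range_succ, ih, Lam_succ_eq_neg_mul_Lam_sub_one, Lam_succ (α - 1)]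
    field_simp
    ring

lemma summable_Lam {α : ℝ} (hα : 0 < α) (hα1 : α < 1) : Summable (Lam α) := by
  have hpartial (N : ℕ) : ∑ m ∈ Finset.range N, -Lam α (m + 1) ≤ 1 := by
    have hsum := sum_range_succ_Lam α N
    rw [Finset.sum_range_succ', Lam_zero] at hsum
    rw [Finset.sum_neg_distrib]
    linarith [Lam_pos_of_neg (by linarith : α - 1 < 0) N]
  have htail : Summable fun m => -Lam α (m + 1) :=
    summable_of_sum_range_le (fun m => (neg_pos.2 (Lam_succ_neg hα hα1 m)).le) hpartial
  exact (summable_nat_add_iff 1).1 (by simpa using htail.neg)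

lemma summable_Lam_mul {α M : ℝ} (hα : 0 < α) (hα1 : α < 1) {v : ℕ → ℝ}
    (hv : ∀ m, |v m| ≤ M) : Summable fun m => Lam α m * v m :=
  ((summable_Lam hα hα1).abs.mul_right M).of_norm_bounded fun m => by
    rw [Real.norm_eq_abs, abs_mul]
    exact mul_le_mul_of_nonneg_left (hv m) (abs_nonneg _)

lemma tsum_Lam_mul_le {α : ℝ} (hα : 0 < α) (hα1 : α < 1) {v : ℕ → ℝ}
    (hs : Summable fun m => Lam α m * v m) (hv : ∀ m, 0 ≤ v (m + 1)) :
    ∑' m, Lam α m * v m ≤ v 0 := by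
  have htail : ∑' m, Lam α (m + 1) * v (m + 1) ≤ 0 :=
    tsum_nonpos fun m => mul_nonpos_of_nonpos_of_nonneg (Lam_succ_neg hα hα1 m).le (hv m)
  rw [hs.tsum_eq_zero_add, Lam_zero, one_mul]
  linarith

lemma nonneg_of_deltaRightPow_nonneg {α h M : ℝ} (hα : 0 < α) (hα1 : α < 1) (hh : 0 < h)
    {u : ℤ → ℝ} (hu : ∀ n, |u n| ≤ M) {j : ℤ} (hright : ∀ k, j < k → 0 ≤ u k)
    (hd : 0 ≤ deltaRightPow α h u j) : 0 ≤ u j := by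
  have hsum : 0 ≤ ∑' m : ℕ, Lam α m * u (j + m) :=
    nonneg_of_mul_nonneg_right hd (Real.rpow_pos_of_pos hh _)
  have hle : ∑' m : ℕ, Lam α m * u (j + m) ≤ u (j + (0 : ℕ)) :=
    tsum_Lam_mul_le hα hα1 (summable_Lam_mul hα hα1 fun m => hu _)
      fun m => hright _ (by omega)
  simpa using hsum.trans hle

theorem nonneg_propagation_general (α h : ℝ) (hα : 0 < α) (hα1 : α < 1) (hh : 0 < h)
    (j₀ j₁ : ℤ) (u : ℤ → ℝ) (M : ℝ) (hu : ∀ n, |u n| ≤ M)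
    (hfrac : ∀ j, j₀ ≤ j → j < j₁ → 0 ≤ deltaRightPow α h u j)
    (htail : ∀ j, j₁ ≤ j → 0 ≤ u j) :
    ∀ j, j₀ ≤ j → 0 ≤ u j := by
  by_contra! hneg
  obtain ⟨j, ⟨hj₀, hj⟩, hmax⟩ := Int.exists_greatest_of_bdd
    (P := fun j => j₀ ≤ j ∧ u j < 0)
    ⟨j₁, fun k hk => by by_contra! hk₁; exact (htail k hk₁.le).not_gt hk.2⟩ hneg
  have hj₁ : j < j₁ := by by_contra! hj₁; exact (htail j hj₁).not_gt hj
  have hright (k : ℤ) (hk : j < k) : 0 ≤ u k := by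
    by_contra! hk'
    exact hk.not_ge (hmax k ⟨by omega, hk'⟩)
  exact hj.not_ge (nonneg_of_deltaRightPow_nonneg hα hα1 hh hu hright (hfrac j hj₀ hj₁))

/-- If `(δ_right)^α u ≥ 0` on `[j₀, j₁)` and `u ≥ 0` on `[j₁, ∞)`, then `u ≥ 0` on `[j₀, ∞)`. -/
theorem nonneg_propagation (α h : ℝ) (hα : 0 < α) (hα1 : α < 1) (hh : 0 < h)
    (j₀ j₁ : ℤ) (hj : j₀ < j₁) (u : ℤ → ℝ) (M : ℝ) (hu : ∀ n, |u n| ≤ M)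
    (hfrac : ∀ j, j₀ ≤ j → j < j₁ → 0 ≤ deltaRightPow α h u j)
    (htail : ∀ j, j₁ ≤ j → 0 ≤ u j) :
    ∀ j, j₀ ≤ j → 0 ≤ u j :=
  nonneg_propagation_general α h hα hα1 hh j₀ j₁ u M hu hfrac htail
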